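/- Let m ∈ ℂ, let U ⊆ ℂ be open, and let P, Q, g : U × ℍ → ℂ (where ℍ = {τ ∈ ℂ : Im τ > 0}) be functions of (μ, τ) that are twice continuously differentiable, with 2Q(μ,τ) ∉ ℤ + τℤ for all (μ,τ) ∈ U × ℍ. Define the Weierstrass functions ℘(z|τ) := 1/z² + ∑_{ω ∈ (ℤ+τℤ)∖{0}} (1/(z−ω)² − 1/ω²) and ℘'(z|τ) := −2·∑_{ω ∈ ℤ+τℤ} 1/(z−ω)³ for z ∉ ℤ+τℤ. Assume the non-autonomous elliptic Calogero–Moser flow equations: 2πi·∂Q/∂τ = P, 2πi·∂P/∂τ = m²·℘'(2Q|τ), and 2πi·∂g/∂τ = −2m·℘(2Q|τ) on U × ℍ. Then for all (μ,τ) ∈ U × ℍ: ∂/∂μ ( P² − m²·℘(2Q|τ) ) = 2πi·∂/∂τ ( 2P·∂Q/∂μ + m·∂g/∂μ ). (This is the vanishing of the dμ∧dτ-component of the exterior derivative of the one-form ω = 2P d_M Q + (H_CM/2πi) dτ + m d_M g, i.e. the time-independence statement for the extended symplectic form dω = 2dP∧dQ + dm∧dg − dH_CM∧dτ/2πi.)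 -/

import Mathlib

/-- The Weierstrass elliptic function `℘(z|τ)` of the lattice `ℤ + τℤ`, defined by
`℘(z|τ) = 1/z² + ∑_{ω ∈ (ℤ+τℤ)∖{0}} (1/(z-ω)² - 1/ω²)`. -/
noncomputable def wp (τ z : ℂ) : ℂ :=
  1 / z ^ 2 + ∑' w : ℤ × ℤ, if w = 0 then 0 else
    (1 / (z - ((w.1 : ℂ) + (w.2 : ℂ) * τ)) ^ 2 - 1 / ((w.1 : ℂ) + (w.2 : ℂ) * τ) ^ 2)

/-- The derivative `℘'(z|τ) = -2 ∑_{ω ∈ ℤ+τℤ} 1/(z-ω)³`. -/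
noncomputable def wpDeriv (τ z : ℂ) : ℂ :=
  -2 * ∑' w : ℤ × ℤ, 1 / (z - ((w.1 : ℂ) + (w.2 : ℂ) * τ)) ^ 3

open EisensteinSeries Metric Filter

lemma summable_vec3 : Summable (fun w : ℤ × ℤ => (‖(![w.2, w.1] : Fin 2 → ℤ)‖ ^ 3)⁻¹) := by
  have h := EisensteinSeries.summable_one_div_norm_rpow (k := 3) (by norm_num)
  have h2 := (((Equiv.prodComm ℤ ℤ).trans (finTwoArrowEquiv ℤ).symm).summable_iff
    (f := fun x : Fin 2 → ℤ => ‖x‖ ^ (-3 : ℝ))).mpr h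
  refine h2.congr fun w => ?_
  simp only [Function.comp, Equiv.trans_apply, Equiv.prodComm_apply, Prod.swap,
    finTwoArrowEquiv_symm_apply]
  rcases eq_or_ne (‖(![w.2, w.1] : Fin 2 → ℤ)‖) 0 with h0 | h0
  · rw [h0, Real.zero_rpow (by norm_num), zero_pow (by norm_num), inv_zero]
  · rw [Real.rpow_neg (norm_nonneg _), ← Real.rpow_natCast (‖_‖) 3]
    norm_num

lemma finite_lattice_small (M : ℝ) :
    {w : ℤ × ℤ | ‖(![w.2, w.1] : Fin 2 → ℤ)‖ < M}.Finite := by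
  obtain ⟨N, hN⟩ := exists_nat_gt M
  apply Set.Finite.subset (Set.finite_Icc ((-(N : ℤ), -(N : ℤ))) ((N : ℤ), (N : ℤ)))
  intro w hw
  simp only [Set.mem_setOf_eq, EisensteinSeries.norm_eq_max_natAbs] at hw
  have hw' : ((max (w.2).natAbs (w.1).natAbs : ℕ) : ℝ) < N := by
    simpa using hw.trans hN
  have : max (w.2).natAbs (w.1).natAbs < N := by exact_mod_cast hw'
  simp only [Set.mem_Icc, Prod.le_def]
  omega

set_option maxHeartbeats 2000000 in
lemma wp_hasDerivAt (τ : ℂ) (hτ : 0 < τ.im) (z₀ : ℂ)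
    (hz : ∀ p q : ℤ, z₀ ≠ (p : ℂ) + (q : ℂ) * τ) :
    HasDerivAt (wp τ) (wpDeriv τ z₀) z₀ := by
  set ℒ : ℤ × ℤ → ℂ := fun w => (w.1 : ℂ) + (w.2 : ℂ) * τ with hℒ
  set V : ℤ × ℤ → ℝ := fun w => ‖(![w.2, w.1] : Fin 2 → ℤ)‖ with hV
  have hV0 : ∀ w, 0 ≤ V w := fun w => norm_nonneg _
  have hV1 : ∀ w : ℤ × ℤ, w ≠ 0 → 1 ≤ V w := by
    intro w hw
    have : (1 : ℕ) ≤ max (w.2).natAbs (w.1).natAbs := by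
      rcases Prod.mk.injEq .. ▸ (fun h => hw h : ¬ w = 0) with _
      have : w.1 ≠ 0 ∨ w.2 ≠ 0 := by
        by_contra h; push_neg at h; exact hw (Prod.ext h.1 h.2)
      omega
    simp only [hV, EisensteinSeries.norm_eq_max_natAbs]
    exact_mod_cast by simpa using this
  set rr : ℝ := EisensteinSeries.r ⟨τ, hτ⟩ with hrr
  have hr : 0 < rr := EisensteinSeries.r_pos _
  have hlow : ∀ w : ℤ × ℤ, w ≠ 0 → rr * V w ≤ ‖ℒ w‖ := by
    intro w hw
    have hx : (![w.2, w.1] : Fin 2 → ℤ) ≠ 0 := by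
      intro h
      apply hw
      have h2 := congrFun h 0
      have h1 := congrFun h 1
      simp at h1 h2
      exact Prod.ext h1 h2
    have h := EisensteinSeries.r_mul_max_le (⟨τ, hτ⟩ : UpperHalfPlane) (x := ![w.2, w.1]) hx
    simp only [Matrix.cons_val_zero, Matrix.cons_val_one, Matrix.head_cons] at h
    rw [hℒ]
    calc rr * V w ≤ ‖(w.2 : ℂ) * τ + (w.1 : ℂ)‖ := h
      _ = ‖(w.1 : ℂ) + (w.2 : ℂ) * τ‖ := by rw [add_comm]
  -- nonvanishing
  have hz' : ∀ w : ℤ × ℤ, z₀ - ℒ w ≠ 0 := fun w => sub_ne_zero.mpr (hz w.1 w.2)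
  set R : ℝ := ‖z₀‖ + 1 with hRdef
  have hR : 0 < R := by positivity
  -- finite set of nearby lattice points
  have hSfin : {w : ℤ × ℤ | V w < 2 * R / rr}.Finite := finite_lattice_small _
  set F : Finset (ℤ × ℤ) := insert 0 hSfin.toFinset with hF
  have hFne : F.Nonempty := Finset.insert_nonempty _ _
  set δ : ℝ := min 1 (F.inf' hFne fun w => ‖z₀ - ℒ w‖) with hδdef
  have hδpos : 0 < δ := by
    refine lt_min one_pos ?_
    rw [Finset.lt_inf'_iff]
    exact fun w _ => norm_pos_iff.mpr (hz' w)
  have hδ1 : δ ≤ 1 := min_le_left _ _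
  have hδle : ∀ w : ℤ × ℤ, δ ≤ ‖z₀ - ℒ w‖ := by
    intro w
    by_cases hw : w ∈ F
    · exact le_trans (min_le_right _ _) (Finset.inf'_le _ hw)
    · have hw0 : w ≠ 0 := fun h => hw (by simp [hF, h])
      have hwS : ¬ (V w < 2 * R / rr) := fun h => hw (by simp [hF, Set.Finite.mem_toFinset]; right; exact h)
      push_neg at hwS
      have h1 : 2 * R ≤ rr * V w := by
        rw [div_le_iff₀ hr] at hwS; linarith [hwS]
      have h2 := hlow w hw0
      have h3 : ‖ℒ w‖ - ‖z₀‖ ≤ ‖z₀ - ℒ w‖ := by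
        rw [norm_sub_rev]; exact norm_sub_norm_le _ _
      have : ‖z₀‖ = R - 1 := by rw [hRdef]; ring
      linarith
  set c : ℝ := min ((δ / 2) / ((3 * R + 4 * rr) / rr)) (rr / 2) with hcdef
  have hc : 0 < c := by
    refine lt_min (by positivity) (by positivity)
  have hcδ : c ≤ δ / 2 := by
    refine le_trans (min_le_left _ _) ?_
    have hB1 : (1 : ℝ) ≤ (3 * R + 4 * rr) / rr := by
      rw [le_div_iff₀ hr]; nlinarith
    calc (δ / 2) / ((3 * R + 4 * rr) / rr) ≤ (δ / 2) / 1 := by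
          apply div_le_div_of_nonneg_left (by positivity) one_pos hB1
      _ = δ / 2 := by ring
  -- the key uniform lower bound on distances to lattice points, on the ball
  have hcb : ∀ w : ℤ × ℤ, ∀ z ∈ ball z₀ (δ / 2), c * (1 + V w) ≤ ‖z - ℒ w‖ := by
    intro w z hzb
    rw [mem_ball, dist_eq_norm] at hzb
    have h3 : δ / 2 ≤ ‖z - ℒ w‖ := by
      have e : z - ℒ w = (z₀ - ℒ w) - (z₀ - z) := by ring
      have t : ‖z₀ - ℒ w‖ - ‖z₀ - z‖ ≤ ‖(z₀ - ℒ w) - (z₀ - z)‖ := norm_sub_norm_le _ _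
      have : ‖z₀ - z‖ < δ / 2 := by rwa [norm_sub_rev]
      rw [e]; linarith [hδle w]
    by_cases hw0 : w = 0
    · subst hw0
      have : V 0 = 0 := by simp [hV, EisensteinSeries.norm_eq_max_natAbs]
      rw [this]
      simpa using le_trans hcδ h3
    · rcases le_or_gt (rr * V w) (3 * R + 3 * rr) with hcase | hcase
      · have hB : 1 + V w ≤ (3 * R + 4 * rr) / rr := by
          rw [le_div_iff₀ hr]; nlinarith
        calc c * (1 + V w) ≤ ((δ / 2) / ((3 * R + 4 * rr) / rr)) * ((3 * R + 4 * rr) / rr) := by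
              apply mul_le_mul (min_le_left _ _) hB (by positivity) (by positivity)
          _ = δ / 2 := div_mul_cancel₀ _ (by positivity)
          _ ≤ ‖z - ℒ w‖ := h3
      · have hl := hlow w hw0
        have hzn : ‖z‖ < R := by
          have : ‖z‖ ≤ ‖z₀‖ + ‖z - z₀‖ := by
            calc ‖z‖ = ‖z₀ + (z - z₀)‖ := by ring_nf
              _ ≤ ‖z₀‖ + ‖z - z₀‖ := norm_add_le _ _
          rw [hRdef]; linarith
        have h4 : ‖ℒ w‖ - ‖z‖ ≤ ‖z - ℒ w‖ := by
          rw [norm_sub_rev]; exact norm_sub_norm_le _ _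
        have h5 : c * (1 + V w) ≤ (rr / 2) * (1 + V w) :=
          mul_le_mul_of_nonneg_right (min_le_right _ _) (by positivity)
        nlinarith [hV0 w]
  -- the series terms
  set f : ℤ × ℤ → ℂ → ℂ := fun w z => if w = 0 then 0 else
    (1 / (z - ℒ w) ^ 2 - 1 / (ℒ w) ^ 2) with hf
  set f' : ℤ × ℤ → ℂ → ℂ := fun w z => if w = 0 then 0 else -2 / (z - ℒ w) ^ 3 with hf'
  set u : ℤ × ℤ → ℝ := fun w => 2 / (c * (1 + V w)) ^ 3 with hu
  have hune : ∀ w, 0 < c * (1 + V w) := fun w => mul_pos hc (by linarith [hV0 w])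
  have hball0 : z₀ ∈ ball z₀ (δ / 2) := mem_ball_self (by positivity)
  have hne : ∀ w, ∀ z ∈ ball z₀ (δ / 2), z - ℒ w ≠ 0 := by
    intro w z hzb h
    have h2 := hcb w z hzb
    rw [h, norm_zero] at h2
    nlinarith [hune w]
  have husum : Summable u := by
    apply Summable.of_norm_bounded_eventually (g := fun w => (2 / c ^ 3) * ((V w) ^ 3)⁻¹)
      (by simpa only [hV] using (summable_vec3.mul_left (2 / c ^ 3)))
    filter_upwards [(Set.finite_singleton ((0 : ℤ × ℤ))).eventually_cofinite_notMem] with w hw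
    have hw0 : w ≠ 0 := by simpa using hw
    have h1 := hV1 w hw0
    simp only [hu]
    rw [Real.norm_of_nonneg (by positivity)]
    have hVpos : 0 < V w := by linarith
    calc 2 / (c * (1 + V w)) ^ 3 ≤ 2 / (c * V w) ^ 3 := by
          apply div_le_div_of_nonneg_left (by norm_num) (by positivity) ?_
          apply pow_le_pow_left₀ (by positivity) ?_ 3
          nlinarith
      _ = 2 / c ^ 3 * ((V w) ^ 3)⁻¹ := by field_simp
  have hder : ∀ w, ∀ z ∈ ball z₀ (δ / 2), HasDerivAt (f w) (f' w z) z := by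
    intro w z hzb
    by_cases hw : w = 0
    · simp only [hf, hf', if_pos hw]
      exact hasDerivAt_const z 0
    · simp only [hf, hf', if_neg hw, one_div]
      have h1 : HasDerivAt (fun z : ℂ => (z - ℒ w) ^ 2) (2 * (z - ℒ w)) z := by
        simpa using ((hasDerivAt_id z).sub_const (ℒ w)).fun_pow 2
      have hzw : z - ℒ w ≠ 0 := hne w z hzb
      have h2 := (h1.fun_inv (pow_ne_zero 2 hzw)).sub_const ((ℒ w) ^ 2)⁻¹
      refine h2.congr_deriv ?_
      field_simp
  have hbound : ∀ w, ∀ z ∈ ball z₀ (δ / 2), ‖f' w z‖ ≤ u w := by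
    intro w z hzb
    by_cases hw : w = 0
    · simp only [hf', hu, if_pos hw, norm_zero]
      positivity
    · simp only [hf', hu, if_neg hw]
      rw [norm_div, norm_pow]
      have h2 : ‖(-2 : ℂ)‖ = 2 := by norm_num
      rw [h2]
      apply div_le_div₀ (by norm_num) (le_refl 2) (by positivity)
      exact pow_le_pow_left₀ (le_of_lt (hune w)) (hcb w z hzb) 3
  have hg0 : Summable fun w => f w z₀ := by
    set C2 : ℝ := R * (2 + R / rr) / (c ^ 2 * rr) with hC2
    apply Summable.of_norm_bounded_eventually (g := fun w => C2 * ((V w) ^ 3)⁻¹)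
      (by simpa only [hV] using (summable_vec3.mul_left C2))
    filter_upwards [(Set.finite_singleton ((0 : ℤ × ℤ))).eventually_cofinite_notMem] with w hw
    have hw0 : w ≠ 0 := by simpa using hw
    have hV1w := hV1 w hw0
    have hVpos : 0 < V w := by linarith
    have hb := hcb w z₀ hball0
    have hbV : c * V w ≤ ‖z₀ - ℒ w‖ := le_trans (by nlinarith) hb
    have hlw := hlow w hw0
    have hbpos : 0 < ‖ℒ w‖ := lt_of_lt_of_le (by positivity) hlw
    have hω : ℒ w ≠ 0 := fun h => by rw [h, norm_zero] at hbpos; exact lt_irrefl 0 hbpos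
    have hzω := hz' w
    have hval : f w z₀ = z₀ * (2 * ℒ w - z₀) / ((z₀ - ℒ w) ^ 2 * (ℒ w) ^ 2) := by
      simp only [hf, if_neg hw0]
      field_simp
      ring
    rw [hval, norm_div, norm_mul, norm_mul, norm_pow, norm_pow]
    have ha : ‖z₀‖ ≤ R := by rw [hRdef]; linarith
    have hrrb : rr ≤ ‖ℒ w‖ := le_trans (by nlinarith) hlw
    have hn : ‖2 * ℒ w - z₀‖ ≤ (2 + R / rr) * ‖ℒ w‖ := by
      have h1 : ‖2 * ℒ w - z₀‖ ≤ ‖2 * ℒ w‖ + ‖z₀‖ := norm_sub_le _ _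
      have h2 : ‖(2 : ℂ) * ℒ w‖ = 2 * ‖ℒ w‖ := by rw [norm_mul]; norm_num
      have hRb : ‖z₀‖ ≤ (R / rr) * ‖ℒ w‖ := by
        calc ‖z₀‖ ≤ R := ha
          _ = (R / rr) * rr := by field_simp
          _ ≤ (R / rr) * ‖ℒ w‖ := by
              apply mul_le_mul_of_nonneg_left hrrb (by positivity)
      rw [h2] at h1
      nlinarith
    have hstep : ‖z₀‖ * ‖2 * ℒ w - z₀‖ / (‖z₀ - ℒ w‖ ^ 2 * ‖ℒ w‖ ^ 2)
        ≤ (R * ((2 + R / rr) * ‖ℒ w‖)) / ((c * V w) ^ 2 * ((rr * V w) * ‖ℒ w‖)) := by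
      apply div_le_div₀ (by positivity) ?_ ?_ ?_
      · exact mul_le_mul ha hn (norm_nonneg _) hR.le
      · exact mul_pos (pow_pos (mul_pos hc hVpos) 2) (mul_pos (mul_pos hr hVpos) hbpos)
      · have h1 : (c * V w) ^ 2 ≤ ‖z₀ - ℒ w‖ ^ 2 :=
          pow_le_pow_left₀ (by positivity) hbV 2
        have h2 : (rr * V w) * ‖ℒ w‖ ≤ ‖ℒ w‖ ^ 2 := by nlinarith
        have h3 : (0 : ℝ) ≤ (c * V w) ^ 2 := by positivity
        nlinarith
    have heq : (R * ((2 + R / rr) * ‖ℒ w‖)) / ((c * V w) ^ 2 * ((rr * V w) * ‖ℒ w‖))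
        = C2 * ((V w) ^ 3)⁻¹ := by
      have hbne : ‖ℒ w‖ ≠ 0 := ne_of_gt hbpos
      have e1 : (c * V w) ^ 2 * ((rr * V w) * ‖ℒ w‖) = ((c ^ 2 * rr) * (V w) ^ 3) * ‖ℒ w‖ := by
        ring
      have e2 : R * ((2 + R / rr) * ‖ℒ w‖) = (R * (2 + R / rr)) * ‖ℒ w‖ := by ring
      rw [e1, e2, mul_div_mul_right _ _ hbne, hC2, div_eq_mul_inv, div_eq_mul_inv, mul_inv]
      ring
    rw [heq] at hstep
    exact hstep
  have hkey : HasDerivAt (fun z => ∑' w : ℤ × ℤ, f w z) (∑' w : ℤ × ℤ, f' w z₀) z₀ :=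
    hasDerivAt_tsum_of_isPreconnected husum isOpen_ball (convex_ball _ _).isPreconnected
      hder hbound hball0 hg0 hball0
  have hz0 : z₀ ≠ 0 := by
    have := hz 0 0
    simpa using this
  have h0 : HasDerivAt (fun z : ℂ => 1 / z ^ 2) (-2 / z₀ ^ 3) z₀ := by
    simp only [one_div]
    have h1 : HasDerivAt (fun z : ℂ => z ^ 2) (2 * z₀) z₀ := by
      simpa using (hasDerivAt_id z₀).fun_pow 2
    have h2 := h1.fun_inv (pow_ne_zero 2 hz0)
    refine h2.congr_deriv ?_
    field_simp
  have htotal := h0.fun_add hkey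
  have hfun : (fun z => 1 / z ^ 2 + ∑' w : ℤ × ℤ, f w z) = wp τ := by
    funext z
    simp only [wp, hf, hℒ]
  rw [hfun] at htotal
  refine htotal.congr_deriv (Eq.symm ?_)
  have hsumh : Summable (fun w : ℤ × ℤ => 1 / (z₀ - ℒ w) ^ 3) := by
    apply Summable.of_norm_bounded husum
    intro w
    rw [norm_div, norm_pow, norm_one]
    simp only [hu]
    apply div_le_div₀ (by norm_num) (by norm_num) (by positivity)
    exact pow_le_pow_left₀ (le_of_lt (hune w)) (hcb w z₀ hball0) 3
  have hc0 : ℒ 0 = 0 := by simp [hℒ]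
  calc wpDeriv τ z₀ = -2 * ∑' w : ℤ × ℤ, 1 / (z₀ - ℒ w) ^ 3 := by simp only [wpDeriv, hℒ]
    _ = -2 * (1 / (z₀ - ℒ 0) ^ 3 + ∑' w : ℤ × ℤ, if w = 0 then 0 else 1 / (z₀ - ℒ w) ^ 3) := by
        rw [← Summable.tsum_eq_add_tsum_ite hsumh 0]
    _ = -2 / z₀ ^ 3 + ∑' w : ℤ × ℤ, f' w z₀ := by
        have hT : ∑' w : ℤ × ℤ, f' w z₀
            = -2 * ∑' w : ℤ × ℤ, (if w = 0 then 0 else 1 / (z₀ - ℒ w) ^ 3) := by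
          rw [← tsum_mul_left]
          apply tsum_congr
          intro w
          simp only [hf']
          split
          · ring
          · ring
        rw [hT, hc0]
        field_simp
        ring


section helpers

variable {F : ℂ → ℂ → ℂ} {Ω : Set (ℂ × ℂ)} {a b : ℂ}

lemma partial_snd_hasDerivAt (hΩ : IsOpen Ω)
    (hF : ContDiffOn ℂ 2 (fun p : ℂ × ℂ => F p.1 p.2) Ω) (h : (a, b) ∈ Ω) :
    HasDerivAt (fun t => F a t)
      (fderiv ℂ (fun p : ℂ × ℂ => F p.1 p.2) (a, b) (0, 1)) b := by
  have hd : DifferentiableAt ℂ (fun p : ℂ × ℂ => F p.1 p.2) (a, b) :=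
    (hF.contDiffAt (hΩ.mem_nhds h)).differentiableAt (by norm_num)
  exact hd.hasFDerivAt.comp_hasDerivAt b ((hasDerivAt_const b a).prodMk (hasDerivAt_id b))

lemma partial_fst_hasDerivAt (hΩ : IsOpen Ω)
    (hF : ContDiffOn ℂ 2 (fun p : ℂ × ℂ => F p.1 p.2) Ω) (h : (a, b) ∈ Ω) :
    HasDerivAt (fun s => F s b)
      (fderiv ℂ (fun p : ℂ × ℂ => F p.1 p.2) (a, b) (1, 0)) a := by
  have hd : DifferentiableAt ℂ (fun p : ℂ × ℂ => F p.1 p.2) (a, b) :=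
    (hF.contDiffAt (hΩ.mem_nhds h)).differentiableAt (by norm_num)
  exact hd.hasFDerivAt.comp_hasDerivAt a ((hasDerivAt_id a).prodMk (hasDerivAt_const a b))

lemma partial_fst_snd_hasDerivAt (hΩ : IsOpen Ω)
    (hF : ContDiffOn ℂ 2 (fun p : ℂ × ℂ => F p.1 p.2) Ω) (h : (a, b) ∈ Ω) (v : ℂ × ℂ) :
    HasDerivAt (fun s => fderiv ℂ (fun p : ℂ × ℂ => F p.1 p.2) (s, b) v)
      (fderiv ℂ (fderiv ℂ (fun p : ℂ × ℂ => F p.1 p.2)) (a, b) (1, 0) v) a := by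
  have hd : DifferentiableAt ℂ (fderiv ℂ (fun p : ℂ × ℂ => F p.1 p.2)) (a, b) :=
    ((hF.contDiffAt (hΩ.mem_nhds h)).fderiv_right (m := 1) (by norm_num)).differentiableAt (by norm_num)
  have h1 : HasDerivAt (fun s => fderiv ℂ (fun p : ℂ × ℂ => F p.1 p.2) (s, b))
      (fderiv ℂ (fderiv ℂ (fun p : ℂ × ℂ => F p.1 p.2)) (a, b) (1, 0)) a :=
    hd.hasFDerivAt.comp_hasDerivAt a ((hasDerivAt_id a).prodMk (hasDerivAt_const a b))
  simpa using h1.clm_apply (hasDerivAt_const a v)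

lemma partial_snd_fst_hasDerivAt (hΩ : IsOpen Ω)
    (hF : ContDiffOn ℂ 2 (fun p : ℂ × ℂ => F p.1 p.2) Ω) (h : (a, b) ∈ Ω) (v : ℂ × ℂ) :
    HasDerivAt (fun t => fderiv ℂ (fun p : ℂ × ℂ => F p.1 p.2) (a, t) v)
      (fderiv ℂ (fderiv ℂ (fun p : ℂ × ℂ => F p.1 p.2)) (a, b) (0, 1) v) b := by
  have hd : DifferentiableAt ℂ (fderiv ℂ (fun p : ℂ × ℂ => F p.1 p.2)) (a, b) :=
    ((hF.contDiffAt (hΩ.mem_nhds h)).fderiv_right (m := 1) (by norm_num)).differentiableAt (by norm_num)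
  have h1 : HasDerivAt (fun t => fderiv ℂ (fun p : ℂ × ℂ => F p.1 p.2) (a, t))
      (fderiv ℂ (fderiv ℂ (fun p : ℂ × ℂ => F p.1 p.2)) (a, b) (0, 1)) b :=
    hd.hasFDerivAt.comp_hasDerivAt b ((hasDerivAt_const b a).prodMk (hasDerivAt_id b))
  simpa using h1.clm_apply (hasDerivAt_const b v)

lemma clairaut (hΩ : IsOpen Ω)
    (hF : ContDiffOn ℂ 2 (fun p : ℂ × ℂ => F p.1 p.2) Ω) (h : (a, b) ∈ Ω) :
    fderiv ℂ (fderiv ℂ (fun p : ℂ × ℂ => F p.1 p.2)) (a, b) (1, 0) (0, 1) =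
      fderiv ℂ (fderiv ℂ (fun p : ℂ × ℂ => F p.1 p.2)) (a, b) (0, 1) (1, 0) :=
  (hF.contDiffAt (hΩ.mem_nhds h)).isSymmSndFDerivAt (by simp [minSmoothness_of_isRCLikeNormedField]) _ _

end helpers

/-- Time-independence of the extended symplectic form for the non-autonomous elliptic
Calogero-Moser system: the `dμ∧dτ`-component of the exterior derivative of the one-form
`ω = 2P d_M Q + (H_CM/2πi)dτ + m d_M g` vanishes, i.e.
`∂_μ(P² − m²℘(2Q|τ)) = 2πi ∂_τ(2P ∂_μQ + m ∂_μ g)`. -/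
theorem cm_one_form_closedness
    (m : ℂ) (U : Set ℂ) (hU : IsOpen U)
    (P Q g : ℂ → ℂ → ℂ)
    (hP : ContDiffOn ℂ 2 (fun p : ℂ × ℂ => P p.1 p.2) (U ×ˢ {τ : ℂ | 0 < τ.im}))
    (hQ : ContDiffOn ℂ 2 (fun p : ℂ × ℂ => Q p.1 p.2) (U ×ˢ {τ : ℂ | 0 < τ.im}))
    (hg : ContDiffOn ℂ 2 (fun p : ℂ × ℂ => g p.1 p.2) (U ×ˢ {τ : ℂ | 0 < τ.im}))
    (hlattice : ∀ μ ∈ U, ∀ τ : ℂ, 0 < τ.im →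
      ∀ p q : ℤ, 2 * Q μ τ ≠ (p : ℂ) + (q : ℂ) * τ)
    (hQflow : ∀ μ ∈ U, ∀ τ : ℂ, 0 < τ.im →
      2 * (Real.pi : ℂ) * Complex.I * deriv (fun t => Q μ t) τ = P μ τ)
    (hPflow : ∀ μ ∈ U, ∀ τ : ℂ, 0 < τ.im →
      2 * (Real.pi : ℂ) * Complex.I * deriv (fun t => P μ t) τ =
        m ^ 2 * wpDeriv τ (2 * Q μ τ))
    (hgflow : ∀ μ ∈ U, ∀ τ : ℂ, 0 < τ.im →
      2 * (Real.pi : ℂ) * Complex.I * deriv (fun t => g μ t) τ =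
        -2 * m * wp τ (2 * Q μ τ)) :
    ∀ μ ∈ U, ∀ τ : ℂ, 0 < τ.im →
      deriv (fun s => (P s τ) ^ 2 - m ^ 2 * wp τ (2 * Q s τ)) μ =
        2 * (Real.pi : ℂ) * Complex.I *
          deriv (fun t => 2 * P μ t * deriv (fun s => Q s t) μ +
            m * deriv (fun s => g s t) μ) τ := by
  intro μ hμ τ hτ
  have hΩ : IsOpen (U ×ˢ {τ : ℂ | 0 < τ.im}) :=
    hU.prod (isOpen_lt continuous_const Complex.continuous_im)
  have hmem : (μ, τ) ∈ U ×ˢ {τ : ℂ | 0 < τ.im} := ⟨hμ, hτ⟩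
  set π2i : ℂ := 2 * (Real.pi : ℂ) * Complex.I with hπ2i
  -- first-order partials at (μ, τ)
  set Pμ : ℂ := fderiv ℂ (fun p : ℂ × ℂ => P p.1 p.2) (μ, τ) (1, 0) with hPμdef
  set Pτ : ℂ := fderiv ℂ (fun p : ℂ × ℂ => P p.1 p.2) (μ, τ) (0, 1) with hPτdef
  set Qμ : ℂ := fderiv ℂ (fun p : ℂ × ℂ => Q p.1 p.2) (μ, τ) (1, 0) with hQμdef
  set Qτ : ℂ := fderiv ℂ (fun p : ℂ × ℂ => Q p.1 p.2) (μ, τ) (0, 1) with hQτdef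
  -- mixed second partials at (μ, τ)
  set Qm : ℂ := fderiv ℂ (fderiv ℂ (fun p : ℂ × ℂ => Q p.1 p.2)) (μ, τ) (0, 1) (1, 0) with hQmdef
  set gm : ℂ := fderiv ℂ (fderiv ℂ (fun p : ℂ × ℂ => g p.1 p.2)) (μ, τ) (0, 1) (1, 0) with hgmdef
  have hQμ : HasDerivAt (fun s => Q s τ) Qμ μ := partial_fst_hasDerivAt hΩ hQ hmem
  have hPμ : HasDerivAt (fun s => P s τ) Pμ μ := partial_fst_hasDerivAt hΩ hP hmem
  have hPτ : HasDerivAt (fun t => P μ t) Pτ τ := partial_snd_hasDerivAt hΩ hP hmem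
  have hwp : HasDerivAt (wp τ) (wpDeriv τ (2 * Q μ τ)) (2 * Q μ τ) :=
    wp_hasDerivAt τ hτ _ (hlattice μ hμ τ hτ)
  have hcomp : HasDerivAt (fun s => wp τ (2 * Q s τ)) (wpDeriv τ (2 * Q μ τ) * (2 * Qμ)) μ :=
    hwp.comp (h := fun s => 2 * Q s τ) μ (hQμ.const_mul 2)
  -- LHS
  have hLHS : HasDerivAt (fun s => (P s τ) ^ 2 - m ^ 2 * wp τ (2 * Q s τ))
      (2 * P μ τ * Pμ - m ^ 2 * (wpDeriv τ (2 * Q μ τ) * (2 * Qμ))) μ := by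
    have h1 := (hPμ.fun_pow 2).fun_sub (hcomp.const_mul (m ^ 2))
    refine h1.congr_deriv ?_
    push_cast
    ring
  -- eventually facts
  have hττ : ∀ᶠ t : ℂ in nhds τ, 0 < t.im :=
    (isOpen_lt continuous_const Complex.continuous_im).eventually_mem hτ
  -- τ-derivative of μ-partial of Q
  have hQμt : HasDerivAt (fun t => deriv (fun s => Q s t) μ) Qm τ := by
    refine (partial_snd_fst_hasDerivAt hΩ hQ hmem (1, 0)).congr_of_eventuallyEq ?_
    filter_upwards [hττ] with t ht
    exact (partial_fst_hasDerivAt hΩ hQ ⟨hμ, ht⟩).deriv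
  have hgμt : HasDerivAt (fun t => deriv (fun s => g s t) μ) gm τ := by
    refine (partial_snd_fst_hasDerivAt hΩ hg hmem (1, 0)).congr_of_eventuallyEq ?_
    filter_upwards [hττ] with t ht
    exact (partial_fst_hasDerivAt hΩ hg ⟨hμ, ht⟩).deriv
  -- RHS
  have hRHS : HasDerivAt (fun t => 2 * P μ t * deriv (fun s => Q s t) μ +
      m * deriv (fun s => g s t) μ)
      ((2 * Pτ) * deriv (fun s => Q s τ) μ + 2 * P μ τ * Qm + m * gm) τ := by
    exact ((hPτ.const_mul 2).fun_mul hQμt).fun_add (hgμt.const_mul m)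
  -- flow relations at (μ, τ)
  have rel2 : π2i * Pτ = m ^ 2 * wpDeriv τ (2 * Q μ τ) := by
    have := hPflow μ hμ τ hτ
    rwa [(partial_snd_hasDerivAt hΩ hP hmem).deriv] at this
  -- mixed relation for Q : π2i * Qm = Pμ
  have rel3 : π2i * Qm = Pμ := by
    have hev : (fun s => π2i * fderiv ℂ (fun p : ℂ × ℂ => Q p.1 p.2) (s, τ) (0, 1))
        =ᶠ[nhds μ] (fun s => P s τ) := by
      filter_upwards [hU.eventually_mem hμ] with s hs
      rw [(partial_snd_hasDerivAt hΩ hQ ⟨hs, hτ⟩).deriv.symm]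
      exact hQflow s hs τ hτ
    have hL : HasDerivAt (fun s => π2i * fderiv ℂ (fun p : ℂ × ℂ => Q p.1 p.2) (s, τ) (0, 1))
        (π2i * fderiv ℂ (fderiv ℂ (fun p : ℂ × ℂ => Q p.1 p.2)) (μ, τ) (1, 0) (0, 1)) μ :=
      (partial_fst_snd_hasDerivAt hΩ hQ hmem (0, 1)).const_mul π2i
    have h2 := (hPμ.congr_of_eventuallyEq hev).unique hL
    rw [hQmdef, ← clairaut hΩ hQ hmem]
    exact h2.symm
  -- mixed relation for g : π2i * gm = -2m * (wpDeriv (2Q) * 2Qμ)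
  have rel4 : π2i * gm = -2 * m * (wpDeriv τ (2 * Q μ τ) * (2 * Qμ)) := by
    have hev : (fun s => π2i * fderiv ℂ (fun p : ℂ × ℂ => g p.1 p.2) (s, τ) (0, 1))
        =ᶠ[nhds μ] (fun s => -2 * m * wp τ (2 * Q s τ)) := by
      filter_upwards [hU.eventually_mem hμ] with s hs
      rw [(partial_snd_hasDerivAt hΩ hg ⟨hs, hτ⟩).deriv.symm]
      exact hgflow s hs τ hτ
    have hL : HasDerivAt (fun s => π2i * fderiv ℂ (fun p : ℂ × ℂ => g p.1 p.2) (s, τ) (0, 1))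
        (π2i * fderiv ℂ (fderiv ℂ (fun p : ℂ × ℂ => g p.1 p.2)) (μ, τ) (1, 0) (0, 1)) μ :=
      (partial_fst_snd_hasDerivAt hΩ hg hmem (0, 1)).const_mul π2i
    have hR : HasDerivAt (fun s => -2 * m * wp τ (2 * Q s τ))
        (-2 * m * (wpDeriv τ (2 * Q μ τ) * (2 * Qμ))) μ := hcomp.const_mul (-2 * m)
    have h2 := (hR.congr_of_eventuallyEq hev).unique hL
    rw [hgmdef, ← clairaut hΩ hg hmem]
    exact h2.symm
  -- assemble
  rw [hLHS.deriv, hRHS.deriv, hQμ.deriv]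
  linear_combination (-2 * Qμ) * rel2 + (-2 * P μ τ) * rel3 + (-m) * rel4
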